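/- arXiv:1503.05285 — 4 statements merged into one kernel-verified Lean document; each statement's English description precedes it below -/
import Mathlib

section
/- The complete Bell polynomials satisfy, for every n ≥ 1, the differential recurrence in ℚ[x_1, x_2, x_3, …]: n·B_{n+1} = Σ_{i≥2} Σ_{j=1}^{i-1} ((i-1)!/((j-1)!·(i-j-1)!))·x_j·x_{i-j}·∂B_n/∂x_{i-1} + Σ_{i≥2} Σ_{j=1}^{i-1} (j!·(i-j)!/i!)·x_{i+1}·∂²B_n/∂x_j ∂x_{i-j} + Σ_{i≥2} x_i·∂B_n/∂x_{i-1}, where in each sum only finitely many terms are nonzero (every term with i > n+1 vanishes). -/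
open MvPolynomial

/-- The `n`-th complete Bell polynomial
`Bₙ = Σ_{c : L(c)=n} (n!/∏ᵢ cᵢ!) · ∏ᵢ (xᵢ/i!)^{cᵢ}`, an element of `ℚ[x₁, x₂, …]`
(the variable `X i` is `xᵢ`); the finitely supported sequences `c` with `L(c) = n` are
identified with partitions of `n` (with `cᵢ` the multiplicity of the part `i`). -/
noncomputable def BellPoly (n : ℕ) : MvPolynomial ℕ ℚ :=
  ∑ p : Nat.Partition n,
    C ((n.factorial : ℚ) /
        ∏ ℓ ∈ Finset.Icc 1 n,
          (((Multiset.count ℓ p.parts).factorial : ℚ) *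
            ((ℓ.factorial : ℚ)) ^ (Multiset.count ℓ p.parts))) *
      ∏ ℓ ∈ Finset.Icc 1 n, X ℓ ^ (Multiset.count ℓ p.parts)


/-!
Removing one part `m` from a partition of `n` gives `∂Bₙ/∂xₘ = (n choose m)·B_{n-m}`, and Euler's
identity for the grading `deg xₘ = m` gives `Σₘ m·xₘ·∂Bₙ/∂xₘ = n·Bₙ`; together they yield
`B_{n+1} = Σₘ (n choose m)·x_{m+1}·B_{n-m}`. Each sum on the right-hand side then becomes a
combination of the `x_{m+1}·B_{n-m}`: the first (regrouped by the pair `(j, i - j)`, with Euler's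
identity applied to `B_{n-m}`) with coefficients `(n - m)·(n choose m)`, the second with
`(m - 1)·(n choose m)` and the third with `(n choose m)` for `m ≥ 1`. These add up to
`n·(n choose m)`.
-/

open Finset
open scoped Nat

theorem finsum_eq_sum_range_of_eq_zero {M : Type*} [AddCommMonoid M] {f : ℕ → M} {N : ℕ}
    (hf : ∀ i, N ≤ i → f i = 0) : ∑ᶠ i, f i = ∑ i ∈ range N, f i :=
  finsum_eq_sum_of_support_subset f fun i hi => by
    rw [coe_range, Set.mem_Iio]
    exact lt_of_not_ge fun h => hi (hf i h)

theorem Finset.sum_range_sum_Ico_one_sub {M : Type*} [AddCommMonoid M] (n : ℕ) (f : ℕ → ℕ → M) :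
    ∑ i ∈ range (n + 2), ∑ j ∈ Ico 1 i, f j (i - j) =
      ∑ a ∈ range (n + 1), ∑ b ∈ range (n - a), f (a + 1) (b + 1) := by
  rw [sum_sigma', sum_sigma']
  refine sum_nbij' (fun x => ⟨x.2 - 1, x.1 - x.2 - 1⟩) (fun y => ⟨y.1 + y.2 + 2, y.1 + 1⟩)
    ?_ ?_ ?_ ?_ ?_ <;> rintro ⟨i, j⟩ h <;>
    simp only [mem_sigma, mem_range, mem_Ico, Sigma.mk.injEq, heq_eq_eq] at h ⊢
  any_goals omega
  congr 1 <;> omega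

theorem Nat.cast_factorial_div_mul_choose (n a b : ℕ) :
    ((a + b + 1)! : ℚ) / (a ! * b !) * n.choose (a + b + 1) =
      n.choose a * ((b + 1) * (n - a).choose (b + 1)) := by
  have hchoose := Nat.choose_mul (n := n) (k := a + b + 1) (s := a) (by omega)
  rw [show a + b + 1 - a = b + 1 by omega] at hchoose
  have hfactorial : ((a + b + 1)! : ℚ) / (a ! * b !) = (b + 1) * (a + b + 1).choose a := by
    rw [Nat.cast_choose ℚ (by omega : a ≤ a + b + 1), show a + b + 1 - a = b + 1 by omega,
      Nat.factorial_succ b]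
    push_cast
    field_simp
  rw [hfactorial, mul_assoc, mul_comm (((a + b + 1).choose a : ℕ) : ℚ), ← Nat.cast_mul, hchoose]
  push_cast
  ring

theorem Multiset.weight_id_toFinsupp {M : Type*} [AddCommMonoid M] [DecidableEq M]
    (r : Multiset M) : Finsupp.weight id (Multiset.toFinsupp r) = r.sum := by
  rw [Finsupp.weight_apply, Finsupp.sum, Multiset.toFinsupp_support, sum_multiset_count]
  rfl

theorem Nat.Partition.mem_Icc_of_mem_parts {n ℓ : ℕ} {p : n.Partition} (h : ℓ ∈ p.parts) :
    ℓ ∈ Icc 1 n :=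
  mem_Icc.2 ⟨p.parts_pos h, p.le_of_mem_parts h⟩

namespace MvPolynomial

variable {σ R : Type*} [CommSemiring R]

theorem IsWeightedHomogeneous.sum_weight_X_mul_pderiv_of_vars_subset {f : MvPolynomial σ R}
    {w : σ → ℕ} {n : ℕ} {s : Finset σ} (h : f.IsWeightedHomogeneous w n) (hs : f.vars ⊆ s) :
    ∑ i ∈ s, w i • (X i * pderiv i f) = n • f := by
  conv_lhs => rw [f.as_sum]
  conv_rhs => rw [f.as_sum]
  simp only [map_sum, mul_sum, smul_sum, X_mul_pderiv_monomial, smul_smul]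
  rw [sum_comm]
  refine sum_congr rfl fun d hd => ?_
  rw [← sum_smul, ← h (mem_support_iff.1 hd), Finsupp.weight_apply,
    Finsupp.sum_of_support_subset d ((support_subset_vars_of_mem_support hd).trans hs)
      (fun i c => c • w i) fun _ _ => zero_smul _ _]
  simp only [smul_eq_mul, mul_comm]

theorem pderiv_monomial_toFinsupp_cons [DecidableEq σ] (i : σ) (r : Multiset σ) (a : R) :
    pderiv i (monomial (Multiset.toFinsupp (i ::ₘ r)) a) =
      monomial (Multiset.toFinsupp r) (a * (r.count i + 1)) := by
  rw [pderiv_monomial, Multiset.toFinsupp_apply, Multiset.count_cons_self,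
    ← Multiset.singleton_add, Multiset.toFinsupp_add, Multiset.toFinsupp_singleton,
    add_tsub_cancel_left]
  push_cast
  rfl

end MvPolynomial

open MvPolynomial

noncomputable def bellDenom (s : Finset ℕ) (r : Multiset ℕ) : ℚ :=
  ∏ ℓ ∈ s, ((r.count ℓ)! * (ℓ ! : ℚ) ^ r.count ℓ)

theorem bellDenom_ne_zero (s : Finset ℕ) (r : Multiset ℕ) : bellDenom s r ≠ 0 :=
  prod_ne_zero_iff.2 fun _ _ => by positivity

theorem bellDenom_of_subset {s t : Finset ℕ} {r : Multiset ℕ} (hst : s ⊆ t)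
    (hr : ∀ ℓ ∈ r, ℓ ∈ s) : bellDenom t r = bellDenom s r :=
  (prod_subset hst fun ℓ _ hℓ => by
    rw [Multiset.count_eq_zero_of_notMem fun h => hℓ (hr ℓ h)]; simp).symm

theorem bellDenom_cons {s : Finset ℕ} {m : ℕ} (hm : m ∈ s) (r : Multiset ℕ) :
    bellDenom s (m ::ₘ r) = (r.count m + 1) * m ! * bellDenom s r := by
  unfold bellDenom
  rw [← mul_prod_erase s _ hm, ← mul_prod_erase s _ hm,
    prod_congr rfl fun ℓ hℓ => by rw [Multiset.count_cons_of_ne (ne_of_mem_erase hℓ)],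
    Multiset.count_cons_self, Nat.factorial_succ]
  push_cast
  ring

theorem factorial_div_bellDenom_cons {n m : ℕ} (hm : m ∈ Icc 1 n) (q : (n - m).Partition) :
    (n ! : ℚ) / bellDenom (Icc 1 n) (m ::ₘ q.parts) * (q.parts.count m + 1) =
      n.choose m • ((n - m)! / bellDenom (Icc 1 (n - m)) q.parts) := by
  rw [bellDenom_cons hm, bellDenom_of_subset (Icc_subset_Icc_right (Nat.sub_le n m))
    fun ℓ h => q.mem_Icc_of_mem_parts h, nsmul_eq_mul, Nat.cast_choose ℚ (mem_Icc.1 hm).2]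
  have := bellDenom_ne_zero (Icc 1 (n - m)) q.parts
  field_simp

theorem bellPoly_eq_sum_monomial (n : ℕ) :
    BellPoly n = ∑ p : n.Partition,
      monomial (Multiset.toFinsupp p.parts) ((n ! : ℚ) / bellDenom (Icc 1 n) p.parts) := by
  refine sum_congr rfl fun p _ => ?_
  rw [monomial_eq, Finsupp.prod_of_support_subset _ (fun ℓ hℓ => ?_) _ fun _ _ => pow_zero _]
  · rfl
  · rw [Multiset.toFinsupp_support, Multiset.mem_toFinset] at hℓ
    exact p.mem_Icc_of_mem_parts hℓ

theorem pderiv_bellPoly {m : ℕ} (hm : m ≠ 0) (n : ℕ) :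
    pderiv m (BellPoly n) = n.choose m • BellPoly (n - m) := by
  classical
  have hvanish : ∀ p : n.Partition, m ∉ p.parts → pderiv m
      (monomial (Multiset.toFinsupp p.parts) ((n ! : ℚ) / bellDenom (Icc 1 n) p.parts)) = 0 := by
    intro p hp
    rw [pderiv_monomial, Multiset.toFinsupp_apply, Multiset.count_eq_zero_of_notMem hp]
    simp
  rw [bellPoly_eq_sum_monomial, map_sum]
  rcases le_or_gt m n with hmn | hnm
  · rw [← sum_filter_of_ne (p := (m ∈ ·.parts)) fun p _ h => not_not.1 (mt (hvanish p) h),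
      sum_subtype _ fun p => mem_filter_univ (p := (m ∈ ·.parts)) p,
      ← (Nat.Partition.partitionWithPartEquiv (Nat.one_le_iff_ne_zero.2 hm) hmn).symm.sum_comp,
      bellPoly_eq_sum_monomial, smul_sum]
    refine sum_congr rfl fun q _ => ?_
    rw [Nat.Partition.partitionWithPartEquiv_symm_apply_parts, pderiv_monomial_toFinsupp_cons,
      factorial_div_bellDenom_cons (mem_Icc.2 ⟨Nat.one_le_iff_ne_zero.2 hm, hmn⟩), smul_monomial]
  · rw [Nat.choose_eq_zero_of_lt hnm, zero_smul]
    exact sum_eq_zero fun p _ => hvanish p fun h => (p.le_of_mem_parts h).not_gt hnm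

theorem pderiv_bellPoly_of_lt {m n : ℕ} (h : n < m) : pderiv m (BellPoly n) = 0 := by
  rw [pderiv_bellPoly (by omega), Nat.choose_eq_zero_of_lt h, zero_smul]

theorem pderiv_zero_bellPoly (n : ℕ) : pderiv 0 (BellPoly n) = 0 := by
  rw [bellPoly_eq_sum_monomial, map_sum]
  refine sum_eq_zero fun p _ => ?_
  rw [pderiv_monomial, Multiset.toFinsupp_apply,
    Multiset.count_eq_zero_of_notMem fun h => (p.parts_pos h).ne' rfl]
  simp

theorem pderiv_pderiv_bellPoly {a b : ℕ} (ha : a ≠ 0) (hb : b ≠ 0) (n : ℕ) :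
    pderiv a (pderiv b (BellPoly n)) = (a + b).choose a • pderiv (a + b) (BellPoly n) := by
  rw [pderiv_bellPoly hb, map_nsmul, pderiv_bellPoly ha, pderiv_bellPoly (by omega), smul_smul,
    smul_smul, Nat.sub_sub, add_comm b a, Nat.choose_symm_add, mul_comm ((a + b).choose b),
    Nat.choose_mul (Nat.le_add_left b a), Nat.add_sub_cancel, mul_comm]

theorem bellPoly_isWeightedHomogeneous (n : ℕ) : (BellPoly n).IsWeightedHomogeneous id n := by
  rw [bellPoly_eq_sum_monomial]
  exact IsWeightedHomogeneous.sum _ _ _ fun p _ =>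
    isWeightedHomogeneous_monomial _ _ _ ((Multiset.weight_id_toFinsupp _).trans p.parts_sum)

theorem vars_bellPoly_subset (n : ℕ) : (BellPoly n).vars ⊆ range (n + 1) := by
  classical
  rw [bellPoly_eq_sum_monomial]
  refine (vars_sum_subset _ _).trans <| biUnion_subset.2 fun p _ => ?_
  rw [vars_monomial (div_ne_zero (by positivity) (bellDenom_ne_zero _ _))]
  intro ℓ hℓ
  rw [Multiset.toFinsupp_support, Multiset.mem_toFinset] at hℓ
  exact mem_range_succ_iff.2 (p.le_of_mem_parts hℓ)

theorem sum_nsmul_X_mul_pderiv_bellPoly (n : ℕ) :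
    ∑ m ∈ range (n + 1), m • (X m * pderiv m (BellPoly n)) = n • BellPoly n :=
  (bellPoly_isWeightedHomogeneous n).sum_weight_X_mul_pderiv_of_vars_subset
    (vars_bellPoly_subset n)

theorem bellPoly_succ (n : ℕ) :
    BellPoly (n + 1) = ∑ m ∈ range (n + 1), n.choose m • (X (m + 1) * BellPoly (n - m)) := by
  apply nsmul_right_injective (Nat.add_one_ne_zero n)
  dsimp only
  rw [← sum_nsmul_X_mul_pderiv_bellPoly, sum_range_succ', smul_sum]
  simp only [pderiv_bellPoly (Nat.add_one_ne_zero _), Nat.add_sub_add_right, mul_smul_comm,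
    smul_smul, zero_smul, add_zero]
  refine sum_congr rfl fun m _ => ?_
  rw [Nat.add_one_mul_choose_eq, mul_comm]

theorem finsum_X_mul_X_mul_pderiv_bellPoly (n : ℕ) :
    ∑ᶠ i : ℕ, ∑ j ∈ Ico 1 i, C (((i - 1)! : ℚ) / ((j - 1)! * (i - j - 1)!)) * X j * X (i - j) *
        pderiv (i - 1) (BellPoly n) =
      ∑ m ∈ range (n + 1), ((n - m) * n.choose m) • (X (m + 1) * BellPoly (n - m)) := by
  set f : ℕ → ℕ → MvPolynomial ℕ ℚ := fun a b =>
    C (((a + b - 1)! : ℚ) / ((a - 1)! * (b - 1)!)) * X a * X b * pderiv (a + b - 1) (BellPoly n)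
  have hregroup : ∀ i, ∑ j ∈ Ico 1 i, C (((i - 1)! : ℚ) / ((j - 1)! * (i - j - 1)!)) * X j *
      X (i - j) * pderiv (i - 1) (BellPoly n) = ∑ j ∈ Ico 1 i, f j (i - j) := fun i =>
    sum_congr rfl fun j hj => by simp only [f, Nat.add_sub_cancel' (mem_Ico.1 hj).2.le]
  rw [finsum_congr hregroup, finsum_eq_sum_range_of_eq_zero (N := n + 2) fun i hi =>
      sum_eq_zero fun j _ => by
        simp only [f, pderiv_bellPoly_of_lt (by omega : n < j + (i - j) - 1), mul_zero],
    sum_range_sum_Ico_one_sub]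
  refine sum_congr rfl fun a _ => ?_
  -- Euler's identity expands `(n - a) • B_{n-a}` into a sum over the second index `b + 1`.
  rw [mul_comm, ← smul_smul, ← mul_smul_comm, ← sum_nsmul_X_mul_pderiv_bellPoly, sum_range_succ',
    zero_smul, add_zero, mul_sum, smul_sum]
  refine sum_congr rfl fun b _ => ?_
  have hcoeff := congrArg (C (σ := ℕ)) (Nat.cast_factorial_div_mul_choose n a b)
  simp only [map_mul, map_add, map_one, map_natCast] at hcoeff
  simp only [f, show a + 1 + (b + 1) - 1 = a + b + 1 by omega, Nat.add_sub_cancel,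
    pderiv_bellPoly (Nat.add_one_ne_zero _), show n - (a + b + 1) = n - a - (b + 1) by omega,
    nsmul_eq_mul]
  push_cast
  linear_combination (X (a + 1) * X (b + 1) * BellPoly (n - a - (b + 1))) * hcoeff

theorem finsum_X_mul_pderiv_pderiv_bellPoly (n : ℕ) :
    ∑ᶠ i : ℕ, ∑ j ∈ Ico 1 i, C ((j ! * (i - j)! : ℚ) / i !) * X (i + 1) *
        pderiv j (pderiv (i - j) (BellPoly n)) =
      ∑ m ∈ range (n + 1), (m - 1) • (X (m + 1) * pderiv m (BellPoly n)) := by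
  have hterm : ∀ i, ∀ j ∈ Ico 1 i, C ((j ! * (i - j)! : ℚ) / i !) * X (i + 1) *
      pderiv j (pderiv (i - j) (BellPoly n)) = X (i + 1) * pderiv i (BellPoly n) := by
    intro i j hj
    obtain ⟨hj1, hji⟩ := mem_Ico.1 hj
    have hcoeff : (j ! * (i - j)! : ℚ) / i ! * i.choose j = 1 := by
      rw [Nat.cast_choose ℚ hji.le]
      field_simp
    have hC := congrArg (C (σ := ℕ)) hcoeff
    rw [map_mul, map_one] at hC
    rw [pderiv_pderiv_bellPoly (by omega) (by omega), Nat.add_sub_cancel' hji.le, nsmul_eq_mul,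
      ← C_eq_coe_nat]
    linear_combination (X (i + 1) * pderiv i (BellPoly n)) * hC
  simp_rw [fun i => sum_congr rfl (hterm i), sum_const, Nat.card_Ico]
  exact finsum_eq_sum_range_of_eq_zero fun i hi => by
    rw [pderiv_bellPoly_of_lt hi, mul_zero, smul_zero]

theorem finsum_X_mul_pderiv_bellPoly (n : ℕ) :
    ∑ᶠ (i : ℕ) (_ : 2 ≤ i), X i * pderiv (i - 1) (BellPoly n) =
      ∑ m ∈ range (n + 1), X (m + 1) * pderiv m (BellPoly n) := by
  simp_rw [finsum_eq_if]
  rw [finsum_eq_sum_range_of_eq_zero (N := n + 2) fun i hi => by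
    rw [pderiv_bellPoly_of_lt (by omega), mul_zero, ite_self], sum_range_succ']
  refine (add_eq_left.2 (if_neg (by omega))).trans (sum_congr rfl fun m _ => ?_)
  rcases m with _ | m
  · rw [pderiv_zero_bellPoly, mul_zero, ite_self]
  · exact if_pos (by omega)

/-- For every `n ≥ 1`, the complete Bell polynomials satisfy
`n·B_{n+1} = Σ_{i≥2} Σ_{j=1}^{i-1} ((i-1)!/((j-1)!·(i-j-1)!))·x_j·x_{i-j}·∂B_n/∂x_{i-1}
 + Σ_{i≥2} Σ_{j=1}^{i-1} (j!·(i-j)!/i!)·x_{i+1}·∂²B_n/∂x_j∂x_{i-j}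
 + Σ_{i≥2} x_i·∂B_n/∂x_{i-1}`. -/
theorem bellPoly_recurrence :
    ∀ n : ℕ, 1 ≤ n →
      C (n : ℚ) * BellPoly (n + 1) =
        (∑ᶠ i : ℕ, ∑ j ∈ Finset.Ico 1 i,
          C (((i - 1).factorial : ℚ) /
              (((j - 1).factorial : ℚ) * ((i - j - 1).factorial : ℚ))) *
            X j * X (i - j) * pderiv (i - 1) (BellPoly n))
        + (∑ᶠ i : ℕ, ∑ j ∈ Finset.Ico 1 i,
          C (((j.factorial : ℚ) * ((i - j).factorial : ℚ)) / (i.factorial : ℚ)) *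
            X (i + 1) * pderiv j (pderiv (i - j) (BellPoly n)))
        + (∑ᶠ (i : ℕ) (_ : 2 ≤ i), X i * pderiv (i - 1) (BellPoly n)) := by
  intro n _
  rw [finsum_X_mul_X_mul_pderiv_bellPoly, finsum_X_mul_pderiv_pderiv_bellPoly,
    finsum_X_mul_pderiv_bellPoly, ← sum_add_distrib, ← sum_add_distrib, bellPoly_succ,
    C_eq_coe_nat, ← nsmul_eq_mul, smul_sum]
  refine sum_congr rfl fun m hm => ?_
  rcases m with _ | m
  · simp [pderiv_zero_bellPoly]
  · obtain ⟨k, rfl⟩ := Nat.exists_eq_add_of_le (mem_range_succ_iff.1 hm)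
    rw [pderiv_bellPoly m.add_one_ne_zero, mul_smul_comm, Nat.add_sub_cancel,
      Nat.add_sub_cancel_left]
    module
end

section
/- For all integers n ≥ 1 and 1 ≤ h ≤ n, the number of fixed-point-free involutions τ of V_n such that γ_n∘τ has exactly 2h orbits (i.e., the number of multichromosomal signed circular genomes on n genes with exactly h chromosomes) equals 2^{n-h} times the number of permutations of an n-element set with exactly h orbits (the unsigned Stirling number of the first kind). -/
/-- The total number of orbits of a permutation of a finite type
(fixed points count as orbits of size 1). -/
noncomputable def orbTotal {α : Type*} [Fintype α] (π : Equiv.Perm α) : ℕ :=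
  Nat.card (MulAction.orbitRel.Quotient (Subgroup.zpowers π) α)

/-- The `2n` gene extremities: `(i, false)` is the tail of gene `i`, `(i, true)` its head. -/
abbrev GVert (n : ℕ) := Fin n × Bool

/-- The gene-edge involution `γₙ`, pairing the tail `(i, false)` with the head `(i, true)`. -/
def gammaPerm (n : ℕ) : Equiv.Perm (GVert n) :=
  Equiv.prodCongr (Equiv.refl (Fin n)) ⟨Bool.not, Bool.not, Bool.not_not, Bool.not_not⟩

/-- A multichromosomal signed circular genome on `n` genes is identified with a
fixed-point-free involution of the set of gene extremities. -/
def IsGenome {n : ℕ} (τ : Equiv.Perm (GVert n)) : Prop :=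
  τ * τ = 1 ∧ ∀ x, τ x ≠ x

/-!
Write `σ = γ τ`. Since `γ σ γ = σ⁻¹`, the involution `γ` maps cycles of `σ` to cycles of `σ`,
and a parity argument shows that it never maps a cycle to itself; so the `2h` cycles of `σ` come
in `h` pairs `{C, γ C}`. Choosing one cycle of each pair selects one extremity of every gene:
read on genes, the chosen cycles form a permutation `π` of the genes with `h` cycles, the choices
of extremities an orientation `f`, and `τ = genomeOf π f`. The pair `(π, f)` is determined by `τ`
up to reversing a cycle of `π` while flipping `f` on it; demanding `f = false` at the minimum of
every cycle of `π` removes this freedom and leaves `2 ^ (n - h)` orientations for each `π`.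
-/

open Equiv Equiv.Perm

namespace Equiv.Perm

variable {α β : Type*}

theorem orbitRel_zpowers (π : Perm α) :
    MulAction.orbitRel (Subgroup.zpowers π) α = SameCycle.setoid π := by
  ext x y
  rw [MulAction.orbitRel_apply, MulAction.mem_orbit_iff]
  constructor
  · rintro ⟨⟨g, hg⟩, rfl⟩
    obtain ⟨k, rfl⟩ := Subgroup.mem_zpowers_iff.mp hg
    exact SameCycle.symm ⟨k, rfl⟩
  · intro h
    obtain ⟨k, rfl⟩ := h.symm
    exact ⟨⟨π ^ k, Subgroup.zpow_mem_zpowers π k⟩, rfl⟩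

theorem sameCycle_permCongr (e : α ≃ β) (p : Perm α) {x y : α} :
    (e.permCongr p).SameCycle (e x) (e y) ↔ p.SameCycle x y := by
  refine exists_congr fun k => ?_
  rw [← permCongrHom_coe, ← map_zpow, permCongrHom_coe, permCongr_apply, symm_apply_apply,
    e.injective.eq_iff]

theorem sumCongr_zpow (a : Perm α) (b : Perm β) (k : ℤ) :
    sumCongr a b ^ k = sumCongr (a ^ k) (b ^ k) :=
  (map_zpow (sumCongrHom α β) (a, b) k).symm

theorem sameCycle_sumCongr_inl {a : Perm α} {b : Perm β} {x y : α} :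
    (sumCongr a b).SameCycle (.inl x) (.inl y) ↔ a.SameCycle x y :=
  exists_congr fun k => by simp [sumCongr_zpow]

theorem sameCycle_sumCongr_inr {a : Perm α} {b : Perm β} {x y : β} :
    (sumCongr a b).SameCycle (.inr x) (.inr y) ↔ b.SameCycle x y :=
  exists_congr fun k => by simp [sumCongr_zpow]

theorem not_sameCycle_sumCongr_inl_inr {a : Perm α} {b : Perm β} {x : α} {y : β} :
    ¬ (sumCongr a b).SameCycle (.inl x) (.inr y) := by
  rintro ⟨k, hk⟩
  simp [sumCongr_zpow] at hk

theorem exists_perm_of_graph_invariant (σ : Perm (α × β)) (g : α → β)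
    (hσ : ∀ x, (σ x).2 = g (σ x).1 ↔ x.2 = g x.1) :
    ∃ π : Perm α, (∀ i, σ (i, g i) = (π i, g (π i))) ∧
      ∀ i j, π.SameCycle i j ↔ σ.SameCycle (i, g i) (j, g j) := by
  let e : {x : α × β // x.2 = g x.1} ≃ α :=
    { toFun x := x.1.1
      invFun i := ⟨(i, g i), rfl⟩
      left_inv x := Subtype.ext (Prod.ext rfl x.2.symm)
      right_inv _ := rfl }
  refine ⟨e.permCongr (σ.subtypePerm hσ), fun i => Prod.ext rfl ((hσ _).2 rfl), fun i j => ?_⟩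
  rw [← e.apply_symm_apply i, ← e.apply_symm_apply j, sameCycle_permCongr, sameCycle_subtypePerm]
  rfl

section Involutions

variable {γ τ : Perm α}

theorem conj_mul_eq_inv (hγ : γ * γ = 1) (hτ : τ * τ = 1) :
    γ * (γ * τ) * γ⁻¹ = (γ * τ)⁻¹ := by
  rw [mul_inv_rev, inv_eq_of_mul_eq_one_right hγ, inv_eq_of_mul_eq_one_right hτ, ← mul_assoc,
    hγ, one_mul]

theorem sameCycle_mul_apply_apply_iff (hγ : γ * γ = 1) (hτ : τ * τ = 1) {x y : α} :
    (γ * τ).SameCycle (γ x) (γ y) ↔ (γ * τ).SameCycle x y := by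
  rw [← sameCycle_inv, ← conj_mul_eq_inv hγ hτ, sameCycle_conj]
  simp

/-- If `σ ^ k x = γ x` for `σ = γ τ`, the point `y = σ ^ ⌊k / 2⌋ x` halfway along satisfies
`γ y = y` or, for odd `k`, `γ y = σ y`, i.e. `τ y = y`. -/
theorem not_sameCycle_mul_apply_self (hγ : γ * γ = 1) (hγx : ∀ x, γ x ≠ x) (hτ : τ * τ = 1)
    (hτx : ∀ x, τ x ≠ x) (x : α) : ¬ (γ * τ).SameCycle x (γ x) := by
  set σ := γ * τ with hσ
  have hrev : ∀ (m : ℤ) z, γ ((σ ^ m) z) = (σ ^ (-m)) (γ z) := fun m z => by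
    have := congrArg (· ^ m) (conj_mul_eq_inv hγ hτ)
    simp only [conj_zpow, inv_zpow, ← zpow_neg] at this
    simpa using DFunLike.congr_fun this (γ z)
  have hadd : ∀ (a b : ℤ) z, (σ ^ a) ((σ ^ b) z) = (σ ^ (a + b)) z := fun a b z => by
    rw [zpow_add, mul_apply]
  rintro ⟨k, hk⟩
  obtain ⟨m, rfl | rfl⟩ := k.even_or_odd'
  · apply hγx ((σ ^ m) x)
    rw [hrev, ← hk, hadd]
    congr 2
    ring
  · apply hτx ((σ ^ m) x)
    apply γ.injective
    rw [← mul_apply, ← hσ, hrev, ← hk, hadd]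
    nth_rewrite 1 [← zpow_one σ]
    rw [hadd]
    congr 2
    ring

end Involutions

section CycleMin

variable [LinearOrder α]

def IsCycleMin (π : Perm α) (i : α) : Prop :=
  ∀ j, π.SameCycle i j → i ≤ j

theorem IsCycleMin.eq_of_sameCycle {π : Perm α} {i j : α} (hi : π.IsCycleMin i)
    (hj : π.IsCycleMin j) (h : π.SameCycle i j) : i = j :=
  le_antisymm (hi j h) (hj i h.symm)

theorem exists_sameCycle_isCycleMin [Finite α] (π : Perm α) (i : α) :
    ∃ m, π.SameCycle i m ∧ π.IsCycleMin m := by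
  classical
  have := Fintype.ofFinite α
  obtain ⟨m, hm, hmin⟩ := (Finset.univ.filter (π.SameCycle i)).exists_min_image id
    ⟨i, by simp [SameCycle.refl]⟩
  simp only [Finset.mem_filter, Finset.mem_univ, true_and, id] at hm hmin
  exact ⟨m, hm, fun j hj => hmin j (hm.trans hj)⟩

end CycleMin

end Equiv.Perm

section OrbitCount

variable {α : Type*} [Fintype α]

theorem orbTotal_eq_card_quotient (π : Perm α) :
    orbTotal π = Nat.card (Quotient (SameCycle.setoid π)) := by
  rw [orbTotal, MulAction.orbitRel.Quotient, orbitRel_zpowers]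

theorem orbTotal_conj (g π : Perm α) : orbTotal (g * π * g⁻¹) = orbTotal π := by
  simp only [orbTotal_eq_card_quotient]
  exact Nat.card_congr (Quotient.congr g⁻¹ fun x y => sameCycle_conj)

theorem orbTotal_eq_mul_of_sameCycle_iff {β : Type*} [Fintype β] (σ : Perm (α × β))
    (π : Perm α) (h : ∀ x y, σ.SameCycle x y ↔ π.SameCycle x.1 y.1 ∧ x.2 = y.2) :
    orbTotal σ = orbTotal π * Fintype.card β := by
  have hσ : SameCycle.setoid σ = (SameCycle.setoid π).prod ⊥ := by
    ext x y
    exact h x y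
  rw [orbTotal_eq_card_quotient, orbTotal_eq_card_quotient, hσ,
    ← Nat.card_congr (Setoid.prodQuotientEquiv _ _), Nat.card_prod,
    Nat.card_congr Setoid.quotientBotEquiv, Nat.card_eq_fintype_card (α := β)]

theorem card_isCycleMin [LinearOrder α] (π : Perm α) :
    Nat.card {i // π.IsCycleMin i} = orbTotal π := by
  rw [orbTotal_eq_card_quotient]
  refine Nat.card_eq_of_bijective (fun i => Quotient.mk _ i.1) ⟨?_, ?_⟩
  · rintro ⟨i, hi⟩ ⟨j, hj⟩ h
    exact Subtype.ext (hi.eq_of_sameCycle hj (Quotient.exact h))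
  · refine Quotient.ind fun i => ?_
    obtain ⟨m, him, hm⟩ := π.exists_sameCycle_isCycleMin i
    exact ⟨⟨m, hm⟩, Quotient.sound him.symm⟩

theorem card_bool_fun_eq_false_on (p : α → Prop) [DecidablePred p] :
    Nat.card {f : α → Bool // ∀ i, p i → f i = false} =
      2 ^ (Fintype.card α - Fintype.card {i // p i}) := by
  let e : {f : α → Bool // ∀ i, p i → f i = false} ≃ ({i // ¬ p i} → Bool) :=
    { toFun f i := f.1 i
      invFun g := ⟨fun i => if h : p i then false else g ⟨i, h⟩, fun i hi => dif_pos hi⟩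
      left_inv f := Subtype.ext <| funext fun i => by
        by_cases h : p i
        · simp [h, f.2 i h]
        · simp [h]
      right_inv g := funext fun i => dif_neg i.2 }
  rw [Nat.card_congr e, Nat.card_fun, Nat.card_eq_fintype_card, Nat.card_eq_fintype_card,
    Fintype.card_subtype_compl, Fintype.card_bool]

end OrbitCount

section Genome

variable {n : ℕ}

@[simp] theorem gammaPerm_apply (x : GVert n) : gammaPerm n x = (x.1, !x.2) := rfl

theorem gammaPerm_mul_self : gammaPerm n * gammaPerm n = 1 := by
  ext x <;> simp

theorem gammaPerm_apply_ne (x : GVert n) : gammaPerm n x ≠ x := by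
  simp [Prod.ext_iff]

theorem IsGenome.conj {τ : Perm (GVert n)} (hτ : IsGenome τ) (g : Perm (GVert n)) :
    IsGenome (g * τ * g⁻¹) := by
  refine ⟨?_, fun x hx => hτ.2 (g⁻¹ x) ?_⟩
  · rw [show g * τ * g⁻¹ * (g * τ * g⁻¹) = g * (τ * τ) * g⁻¹ by group, hτ.1]
    group
  · rw [eq_inv_iff_eq]
    exact hx

def flipGenes (f : Fin n → Bool) : Perm (GVert n) :=
  Function.Involutive.toPerm (fun x => (x.1, xor x.2 (f x.1))) fun x => by simp

@[simp] theorem flipGenes_apply (f : Fin n → Bool) (x : GVert n) :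
    flipGenes f x = (x.1, xor x.2 (f x.1)) := rfl

theorem flipGenes_inv (f : Fin n → Bool) : (flipGenes f)⁻¹ = flipGenes f := rfl

theorem gammaPerm_mul_flipGenes (f : Fin n → Bool) :
    gammaPerm n * flipGenes f = flipGenes f * gammaPerm n := by
  ext x <;> simp

/-- The head of gene `i` is joined to the tail of gene `π i`: the chromosomes are the cycles of
`π`, with every gene read forwards. -/
def cycleGenome (π : Perm (Fin n)) : Perm (GVert n) :=
  Function.Involutive.toPerm (fun x => cond x.2 (π x.1, false) (π⁻¹ x.1, true)) <| by
    rintro ⟨i, _ | _⟩ <;> simp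

theorem isGenome_cycleGenome (π : Perm (Fin n)) : IsGenome (cycleGenome π) :=
  ⟨Equiv.ext fun x => by rcases x with ⟨i, _ | _⟩ <;> simp [cycleGenome],
    fun x => by rcases x with ⟨i, _ | _⟩ <;> simp [cycleGenome]⟩

def genomeOf (π : Perm (Fin n)) (f : Fin n → Bool) : Perm (GVert n) :=
  flipGenes f * cycleGenome π * flipGenes f

theorem genomeOf_apply (π : Perm (Fin n)) (f : Fin n → Bool) (i : Fin n) (s : Bool) :
    genomeOf π f (i, s) = cond (xor s (f i)) (π i, f (π i)) (π⁻¹ i, !f (π⁻¹ i)) := by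
  cases h : xor s (f i) <;> simp [genomeOf, cycleGenome, h]

theorem isGenome_genomeOf (π : Perm (Fin n)) (f : Fin n → Bool) : IsGenome (genomeOf π f) :=
  (isGenome_cycleGenome π).conj (flipGenes f)

theorem gammaPerm_mul_cycleGenome (π : Perm (Fin n)) :
    gammaPerm n * cycleGenome π =
      ((prodComm _ _).trans (boolProdEquivSum _)).symm.permCongr (Perm.sumCongr π⁻¹ π) := by
  ext ⟨i, _ | _⟩ <;> simp [cycleGenome]

theorem sameCycle_gammaPerm_mul_cycleGenome (π : Perm (Fin n)) (x y : GVert n) :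
    (gammaPerm n * cycleGenome π).SameCycle x y ↔ π.SameCycle x.1 y.1 ∧ x.2 = y.2 := by
  rw [gammaPerm_mul_cycleGenome]
  set e := (prodComm (Fin n) Bool).trans (boolProdEquivSum _)
  rw [← e.symm.apply_symm_apply x, ← e.symm.apply_symm_apply y, sameCycle_permCongr]
  rcases x with ⟨i, _ | _⟩ <;> rcases y with ⟨j, _ | _⟩ <;>
    simp [e, sameCycle_sumCongr_inl, sameCycle_sumCongr_inr, not_sameCycle_sumCongr_inl_inr]
  exact fun h => not_sameCycle_sumCongr_inl_inr h.symm

theorem orbTotal_gammaPerm_mul_cycleGenome (π : Perm (Fin n)) :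
    orbTotal (gammaPerm n * cycleGenome π) = 2 * orbTotal π := by
  rw [orbTotal_eq_mul_of_sameCycle_iff _ π (sameCycle_gammaPerm_mul_cycleGenome π),
    Fintype.card_bool, mul_comm]

theorem gammaPerm_mul_genomeOf (π : Perm (Fin n)) (f : Fin n → Bool) :
    gammaPerm n * genomeOf π f =
      flipGenes f * (gammaPerm n * cycleGenome π) * (flipGenes f)⁻¹ := by
  simp only [genomeOf, flipGenes_inv, ← mul_assoc, gammaPerm_mul_flipGenes]

theorem sameCycle_gammaPerm_mul_genomeOf (π : Perm (Fin n)) (f : Fin n → Bool)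
    (x y : GVert n) :
    (gammaPerm n * genomeOf π f).SameCycle x y ↔
      π.SameCycle x.1 y.1 ∧ xor x.2 (f x.1) = xor y.2 (f y.1) := by
  rw [gammaPerm_mul_genomeOf, sameCycle_conj, flipGenes_inv]
  exact sameCycle_gammaPerm_mul_cycleGenome π _ _

theorem orbTotal_gammaPerm_mul_genomeOf (π : Perm (Fin n)) (f : Fin n → Bool) :
    orbTotal (gammaPerm n * genomeOf π f) = 2 * orbTotal π := by
  rw [gammaPerm_mul_genomeOf, orbTotal_conj, orbTotal_gammaPerm_mul_cycleGenome]

theorem sameCycle_iff_exists_sameCycle_gammaPerm_mul_genomeOf (π : Perm (Fin n))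
    (f : Fin n → Bool) (i j : Fin n) :
    π.SameCycle i j ↔ ∃ b, (gammaPerm n * genomeOf π f).SameCycle (i, false) (j, b) := by
  simp only [sameCycle_gammaPerm_mul_genomeOf]
  exact ⟨fun h => ⟨xor (f i) (f j), h, by simp⟩, fun ⟨_, h, _⟩ => h⟩

abbrev NormalizedOrientation (π : Perm (Fin n)) : Type :=
  {f : Fin n → Bool // ∀ i, π.IsCycleMin i → f i = false}

theorem card_normalizedOrientation (π : Perm (Fin n)) :
    Nat.card (NormalizedOrientation π) = 2 ^ (n - orbTotal π) := by
  classical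
  rw [card_bool_fun_eq_false_on, Fintype.card_fin, ← Nat.card_eq_fintype_card, card_isCycleMin]

theorem eq_false_iff_sameCycle_gammaPerm_mul_genomeOf {π : Perm (Fin n)}
    (f : NormalizedOrientation π) {i m : Fin n} (him : π.SameCycle i m) (hm : π.IsCycleMin m) :
    f.1 i = false ↔ (gammaPerm n * genomeOf π f).SameCycle (i, true) (m, true) := by
  simp [sameCycle_gammaPerm_mul_genomeOf, him, f.2 m hm]

theorem genomeOf_inj {π π' : Perm (Fin n)} (f : NormalizedOrientation π)
    (f' : NormalizedOrientation π') : genomeOf π f = genomeOf π' f' ↔ π = π' ∧ f.1 = f'.1 := by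
  refine ⟨fun h => ?_, fun ⟨hπ, hf⟩ => hπ ▸ hf ▸ rfl⟩
  have hsc : ∀ i j, π.SameCycle i j ↔ π'.SameCycle i j := fun i j => by
    rw [sameCycle_iff_exists_sameCycle_gammaPerm_mul_genomeOf π f,
      sameCycle_iff_exists_sameCycle_gammaPerm_mul_genomeOf π' f', h]
  have hff' : f.1 = f'.1 := funext fun i => by
    obtain ⟨m, him, hm⟩ := π.exists_sameCycle_isCycleMin i
    have hm' : π'.IsCycleMin m := fun j hj => hm j ((hsc m j).2 hj)
    have := (eq_false_iff_sameCycle_gammaPerm_mul_genomeOf f him hm).trans <| h ▸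
      (eq_false_iff_sameCycle_gammaPerm_mul_genomeOf f' ((hsc i m).1 him) hm').symm
    revert this
    cases f.1 i <;> cases f'.1 i <;> simp
  refine ⟨Equiv.ext fun i => ?_, hff'⟩
  simpa [genomeOf_apply, hff'] using congrArg Prod.fst (DFunLike.congr_fun h (i, !f'.1 i))

open scoped Classical in
noncomputable def minGene (σ : Perm (GVert n)) (x : GVert n) : Fin n :=
  (Finset.univ.filter fun j => ∃ b, σ.SameCycle x (j, b)).min'
    ⟨x.1, Finset.mem_filter.2 ⟨Finset.mem_univ _, x.2, SameCycle.refl σ x⟩⟩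

theorem minGene_le {σ : Perm (GVert n)} {x : GVert n} {j : Fin n} {b : Bool}
    (h : σ.SameCycle x (j, b)) : minGene σ x ≤ j :=
  Finset.min'_le _ _ (Finset.mem_filter.2 ⟨Finset.mem_univ _, b, h⟩)

theorem exists_sameCycle_minGene (σ : Perm (GVert n)) (x : GVert n) :
    ∃ b, σ.SameCycle x (minGene σ x, b) := by
  classical
  exact (Finset.mem_filter.1 <|
    Finset.min'_mem (Finset.univ.filter fun j => ∃ b, σ.SameCycle x (j, b)) _).2

theorem minGene_eq_of_sameCycle {σ : Perm (GVert n)} {x y : GVert n} (h : σ.SameCycle x y) :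
    minGene σ x = minGene σ y := by
  obtain ⟨b, hb⟩ := exists_sameCycle_minGene σ x
  obtain ⟨b', hb'⟩ := exists_sameCycle_minGene σ y
  exact le_antisymm (minGene_le (h.trans hb')) (minGene_le (h.symm.trans hb))

open scoped Classical in
/-- Of each pair `{C, γ C}` of cycles of `γ τ`, choose the one through the head of the smallest
gene they visit; `orientation τ i` says whether the head of `i` lies on a chosen cycle. -/
noncomputable def orientation (τ : Perm (GVert n)) (i : Fin n) : Bool :=
  decide ((gammaPerm n * τ).SameCycle (i, true) (minGene (gammaPerm n * τ) (i, true), true))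

section Reconstruction

variable {τ : Perm (GVert n)}

theorem IsGenome.sameCycle_gammaPerm_iff (hτ : IsGenome τ) {x y : GVert n} :
    (gammaPerm n * τ).SameCycle (gammaPerm n x) (gammaPerm n y) ↔
      (gammaPerm n * τ).SameCycle x y :=
  sameCycle_mul_apply_apply_iff gammaPerm_mul_self hτ.1

theorem IsGenome.not_sameCycle_gammaPerm (hτ : IsGenome τ) (x : GVert n) :
    ¬ (gammaPerm n * τ).SameCycle x (gammaPerm n x) :=
  not_sameCycle_mul_apply_self gammaPerm_mul_self gammaPerm_apply_ne hτ.1 hτ.2 x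

theorem IsGenome.minGene_gammaPerm (hτ : IsGenome τ) (x : GVert n) :
    minGene (gammaPerm n * τ) (gammaPerm n x) = minGene (gammaPerm n * τ) x := by
  obtain ⟨b, hb⟩ := exists_sameCycle_minGene (gammaPerm n * τ) x
  obtain ⟨b', hb'⟩ := exists_sameCycle_minGene (gammaPerm n * τ) (gammaPerm n x)
  refine le_antisymm (minGene_le (b := !b) (hτ.sameCycle_gammaPerm_iff.2 hb))
    (minGene_le (b := !b') ?_)
  simpa using hτ.sameCycle_gammaPerm_iff.2 hb'

theorem IsGenome.minGene_mk_eq (hτ : IsGenome τ) (i : Fin n) (b b' : Bool) :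
    minGene (gammaPerm n * τ) (i, b) = minGene (gammaPerm n * τ) (i, b') := by
  obtain rfl | rfl := b'.eq_or_eq_not b
  · rfl
  · exact (hτ.minGene_gammaPerm (i, b)).symm

theorem IsGenome.sameCycle_minGene_iff (hτ : IsGenome τ) (x : GVert n) :
    (gammaPerm n * τ).SameCycle x (minGene (gammaPerm n * τ) x, true) ↔
      x.2 = orientation τ x.1 := by
  rcases x with ⟨i, _ | _⟩
  · rw [show ((i, false) : GVert n) = gammaPerm n (i, true) from rfl, hτ.minGene_gammaPerm]
    obtain ⟨b, hb⟩ := exists_sameCycle_minGene (gammaPerm n * τ) (i, true)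
    simp only [orientation, gammaPerm_apply, Bool.not_true, eq_comm (a := false),
      decide_eq_false_iff_not]
    refine ⟨fun h h' => hτ.not_sameCycle_gammaPerm _ (h'.trans h.symm), fun h => ?_⟩
    cases b
    · simpa using hτ.sameCycle_gammaPerm_iff.2 hb
    · exact absurd hb h
  · simp [orientation]

theorem IsGenome.orientation_iff_of_sameCycle (hτ : IsGenome τ) {x y : GVert n}
    (h : (gammaPerm n * τ).SameCycle x y) :
    x.2 = orientation τ x.1 ↔ y.2 = orientation τ y.1 := by
  rw [← hτ.sameCycle_minGene_iff, ← hτ.sameCycle_minGene_iff, minGene_eq_of_sameCycle h]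
  exact ⟨h.symm.trans, h.trans⟩

theorem IsGenome.exists_genomeOf_eq (hτ : IsGenome τ) :
    ∃ π, ∃ f : NormalizedOrientation π, genomeOf π f = τ := by
  set σ := gammaPerm n * τ with hσ
  set g := orientation τ
  obtain ⟨π, hπ, hsc⟩ := exists_perm_of_graph_invariant σ g fun x =>
    (hτ.orientation_iff_of_sameCycle (SameCycle.refl σ x).apply_right).symm
  have hτg : ∀ i, τ (i, g i) = (π i, !g (π i)) := fun i => by
    rw [show τ = gammaPerm n * σ by rw [hσ, ← mul_assoc, gammaPerm_mul_self, one_mul],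
      mul_apply, hπ]
    rfl
  refine ⟨π, ⟨fun i => !g i, fun i hi => ?_⟩, Equiv.ext fun ⟨i, s⟩ => ?_⟩
  · have hmin : minGene σ (i, true) = i := by
      obtain ⟨b, hb⟩ := exists_sameCycle_minGene σ (i, g i)
      obtain rfl : b = g (minGene σ (i, g i)) := (hτ.orientation_iff_of_sameCycle hb).1 rfl
      rw [hτ.minGene_mk_eq i true (g i)]
      exact le_antisymm (minGene_le (SameCycle.refl σ _)) (hi _ ((hsc _ _).2 hb))
    simp [g, orientation, ← hσ, hmin, SameCycle.refl]
  · rw [genomeOf_apply]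
    obtain rfl | rfl := s.eq_or_eq_not (g i)
    · simp [hτg]
    · have := congrArg τ (hτg (π⁻¹ i))
      rw [← mul_apply τ τ, hτ.1, one_apply] at this
      simpa using this

end Reconstruction

noncomputable def genomeEquiv (n : ℕ) :
    (Σ π : Perm (Fin n), NormalizedOrientation π) ≃ {τ : Perm (GVert n) // IsGenome τ} :=
  Equiv.ofBijective (fun s => ⟨genomeOf s.1 s.2, isGenome_genomeOf _ _⟩)
    ⟨fun ⟨π, f⟩ ⟨π', f'⟩ h => by
      obtain ⟨rfl, hf⟩ := (genomeOf_inj f f').1 (congrArg Subtype.val h)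
      rw [Subtype.ext hf],
    fun τ => by
      obtain ⟨π, f, hτ⟩ := τ.2.exists_genomeOf_eq
      exact ⟨⟨π, f⟩, Subtype.ext hτ⟩⟩

theorem orbTotal_gammaPerm_mul_genomeEquiv (s : Σ π : Perm (Fin n), NormalizedOrientation π) :
    orbTotal (gammaPerm n * (genomeEquiv n s).1) = 2 * orbTotal s.1 :=
  orbTotal_gammaPerm_mul_genomeOf _ _

end Genome

/-- For all `n ≥ 1` and `1 ≤ h ≤ n`, the number of fixed-point-free involutions `τ` of
`Vₙ` such that `γₙ∘τ` has exactly `2h` orbits (i.e. the number of multichromosomal signed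
circular genomes on `n` genes with exactly `h` chromosomes) equals `2^{n-h}` times the
number of permutations of an `n`-element set with exactly `h` orbits (the unsigned
Stirling number of the first kind). -/
theorem card_genomes_with_chromosomes_eq :
    ∀ n h : ℕ, 1 ≤ n → 1 ≤ h → h ≤ n →
      Nat.card {τ : Equiv.Perm (GVert n) //
          IsGenome τ ∧ orbTotal (gammaPerm n * τ) = 2 * h} =
        2 ^ (n - h) * Nat.card {π : Equiv.Perm (Fin n) // orbTotal π = h} := by
  intro n h _ _ _
  classical
  let e : {τ : Perm (GVert n) // IsGenome τ ∧ orbTotal (gammaPerm n * τ) = 2 * h} ≃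
      Σ π : {π : Perm (Fin n) // orbTotal π = h}, NormalizedOrientation π.1 :=
    (subtypeSubtypeEquivSubtypeInter _ _).symm.trans <|
      ((genomeEquiv n).subtypeEquiv fun s => by
        rw [orbTotal_gammaPerm_mul_genomeEquiv]; omega).symm.trans (subtypeSigmaEquiv _ _)
  rw [Nat.card_congr e, Nat.card_sigma,
    Finset.sum_congr rfl fun π _ => by rw [card_normalizedOrientation, π.2],
    Finset.sum_const, Finset.card_univ, smul_eq_mul, Nat.card_eq_fintype_card, mul_comm]
end

section
/- The numbers M_n(h;c) do not depend on the choice of the reference unichromosomal genome P: if σ and σ' are fixed-point-free involutions of V_n such that γ_n∘σ and γ_n∘σ' each have exactly 2 orbits, then for every h ≥ 1 and every finitely supported sequence c of nonnegative integers, the number of fixed-point-free involutions τ of V_n such that γ_n∘τ has exactly 2h orbits and σ∘τ has exactly 2·c_ℓ orbits of size ℓ for every ℓ is equal to the number of fixed-point-free involutions τ of V_n such that γ_n∘τ has exactly 2h orbits and σ'∘τ has exactly 2·c_ℓ orbits of size ℓ for every ℓ. -/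
/-- The number of orbits of size `ℓ` of a permutation of a finite type
(each orbit of size `ℓ` contributes `ℓ` points of minimal period `ℓ`). -/
noncomputable def orbCount {α : Type*} [Fintype α] (π : Equiv.Perm α) (ℓ : ℕ) : ℕ :=
  Nat.card {x : α // Function.minimalPeriod (⇑π) x = ℓ} / ℓ

namespace GenomeAux

lemma mem_orbit_zpowers_iff {α : Type*} (π : Equiv.Perm α) (a b : α) :
    a ∈ MulAction.orbit (Subgroup.zpowers π) b ↔ ∃ k : ℤ, (π ^ k) b = a := by
  rw [MulAction.mem_orbit_iff]
  constructor
  · rintro ⟨⟨u, hu⟩, rfl⟩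
    obtain ⟨k, rfl⟩ := Subgroup.mem_zpowers_iff.mp hu
    exact ⟨k, rfl⟩
  · rintro ⟨k, rfl⟩
    exact ⟨⟨π ^ k, Subgroup.mem_zpowers_iff.mpr ⟨k, rfl⟩⟩, rfl⟩


lemma minimalPeriod_conj {α : Type*} (g π : Equiv.Perm α) (x : α) :
    Function.minimalPeriod ⇑(g * π * g⁻¹) (g x) = Function.minimalPeriod ⇑π x := by
  have hsc : Function.Semiconj ⇑g ⇑π ⇑(g * π * g⁻¹) := fun y => by
    simp [Equiv.Perm.mul_apply]
  have key : ∀ m : ℕ,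
      Function.IsPeriodicPt ⇑π m x ↔ Function.IsPeriodicPt ⇑(g * π * g⁻¹) m (g x) := by
    intro m
    have hit := (hsc.iterate_right m) x
    unfold Function.IsPeriodicPt Function.IsFixedPt
    rw [← hit]
    exact ⟨fun h => by rw [h], fun h => g.injective h⟩
  exact Nat.dvd_antisymm
    (Function.IsPeriodicPt.minimalPeriod_dvd
      ((key _).mp (Function.isPeriodicPt_minimalPeriod _ _)))
    (Function.IsPeriodicPt.minimalPeriod_dvd
      ((key _).mpr (Function.isPeriodicPt_minimalPeriod _ _)))

lemma orbCount_conj {α : Type*} [Fintype α] (g π : Equiv.Perm α) (ℓ : ℕ) :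
    orbCount (g * π * g⁻¹) ℓ = orbCount π ℓ := by
  unfold orbCount
  congr 1
  refine Nat.card_congr (Equiv.subtypeEquiv g.symm fun x => ?_)
  rw [← minimalPeriod_conj g π (g.symm x), Equiv.apply_symm_apply]

lemma orbTotal_conj {α : Type*} [Fintype α] (g π : Equiv.Perm α) :
    orbTotal (g * π * g⁻¹) = orbTotal π := by
  unfold orbTotal
  refine Nat.card_congr (Quotient.congr g.symm fun a b => ?_)
  rw [MulAction.orbitRel_apply, MulAction.orbitRel_apply,
    mem_orbit_zpowers_iff, mem_orbit_zpowers_iff]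
  have hcz : ∀ k : ℤ, ∀ y : α, ((g * π * g⁻¹) ^ k) y = g ((π ^ k) (g.symm y)) := by
    intro k y
    rw [show (g * π * g⁻¹) ^ k = g * π ^ k * g⁻¹ from conj_zpow]
    rfl
  constructor
  · rintro ⟨k, hk⟩
    exact ⟨k, by rw [hcz] at hk; rw [← hk]; simp⟩
  · rintro ⟨k, hk⟩
    exact ⟨k, by rw [hcz, hk]; simp⟩

lemma transfer {n : ℕ} (g τ σ σ' : Equiv.Perm (GVert n)) (h : ℕ) (c : ℕ → ℕ)
    (hgγ : gammaPerm n * g = g * gammaPerm n)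
    (hgσ : σ' * g = g * σ)
    (ht : IsGenome τ ∧ orbTotal (gammaPerm n * τ) = 2 * h ∧
      ∀ ℓ, 1 ≤ ℓ → orbCount (σ * τ) ℓ = 2 * c ℓ) :
    IsGenome (g * τ * g⁻¹) ∧ orbTotal (gammaPerm n * (g * τ * g⁻¹)) = 2 * h ∧
      ∀ ℓ, 1 ≤ ℓ → orbCount (σ' * (g * τ * g⁻¹)) ℓ = 2 * c ℓ := by
  obtain ⟨⟨hτ1, hτf⟩, hτo, hτc⟩ := ht
  refine ⟨⟨?_, ?_⟩, ?_, ?_⟩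
  · have hgr : (g * τ * g⁻¹) * (g * τ * g⁻¹) = g * (τ * τ) * g⁻¹ := by group
    rw [hgr, hτ1, mul_one]
    simp
  · intro x hx
    apply hτf (g⁻¹ x)
    have h1 := congrArg (⇑(g⁻¹ : Equiv.Perm (GVert n))) hx
    simpa [Equiv.Perm.mul_apply] using h1
  · have hre : gammaPerm n * (g * τ * g⁻¹) = g * (gammaPerm n * τ) * g⁻¹ := by
      rw [← mul_assoc, ← mul_assoc, hgγ]; group
    rw [hre, orbTotal_conj]
    exact hτo
  · intro ℓ hℓ
    have hre : σ' * (g * τ * g⁻¹) = g * (σ * τ) * g⁻¹ := by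
      rw [← mul_assoc, ← mul_assoc, hgσ]; group
    rw [hre, orbCount_conj]
    exact hτc ℓ hℓ

lemma gamma_apply {n : ℕ} (i : Fin n) (b : Bool) : gammaPerm n (i, b) = (i, !b) := rfl

def stdSigma (n : ℕ) [NeZero n] : Equiv.Perm (GVert n) where
  toFun p := if p.2 then (p.1 - 1, false) else (p.1 + 1, true)
  invFun p := if p.2 then (p.1 - 1, false) else (p.1 + 1, true)
  left_inv p := by rcases p with ⟨i, b⟩; cases b <;> simp
  right_inv p := by rcases p with ⟨i, b⟩; cases b <;> simp

lemma stdSigma_false {n : ℕ} [NeZero n] (i : Fin n) : stdSigma n (i, false) = (i + 1, true) := rfl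
lemma stdSigma_true {n : ℕ} [NeZero n] (i : Fin n) : stdSigma n (i, true) = (i - 1, false) := rfl

lemma exists_normal {n : ℕ} [NeZero n] (σ : Equiv.Perm (GVert n))
    (hσ : IsGenome σ) (h2 : orbTotal (gammaPerm n * σ) = 2) :
    ∃ e : Equiv.Perm (GVert n),
      (∀ p, gammaPerm n (e p) = e (gammaPerm n p)) ∧
      (∀ p, σ (e p) = e (stdSigma n p)) := by
  set γ := gammaPerm n with hγdef
  set π := γ * σ with hπdef
  obtain ⟨hσ1, hσfp⟩ := hσ
  -- basic involution facts
  have hγ2 : ∀ y, γ (γ y) = y := by rintro ⟨i, b⟩; simp [hγdef, gamma_apply]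
  have hγγ : γ * γ = 1 := by
    ext y : 1
    simpa [Equiv.Perm.mul_apply] using hγ2 y
  have hγfp : ∀ y, γ y ≠ y := by
    rintro ⟨i, b⟩ h
    rw [gamma_apply] at h
    cases b <;> simp at h
  have hσ2 : ∀ y, σ (σ y) = y := by
    intro y
    have := congrArg (fun f : Equiv.Perm (GVert n) => f y) hσ1
    simpa [Equiv.Perm.mul_apply] using this
  have hγinv : γ⁻¹ = γ := inv_eq_of_mul_eq_one_right hγγ
  have hσinv : σ⁻¹ = σ := inv_eq_of_mul_eq_one_right hσ1
  have hπinv : π⁻¹ = σ * γ := by rw [hπdef, mul_inv_rev, hγinv, hσinv]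
  -- semiconjugation
  have hsγ : SemiconjBy γ π π⁻¹ := by
    unfold SemiconjBy
    rw [hπinv, hπdef, ← mul_assoc, hγγ, one_mul, mul_assoc, hγγ, mul_one]
  have hsσ : SemiconjBy σ π π⁻¹ := by
    unfold SemiconjBy
    rw [hπinv, hπdef, mul_assoc]
  have hconjγ : ∀ (k : ℤ) (y : GVert n), γ ((π ^ k) y) = (π ^ (-k)) (γ y) := by
    intro k y
    have := (hsγ.zpow_right k).eq
    have h2 : γ * π ^ k = π ^ (-k) * γ := by
      rw [this, zpow_neg, inv_zpow]
    have := congrArg (fun f : Equiv.Perm (GVert n) => f y) h2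
    simpa [Equiv.Perm.mul_apply] using this
  have hconjσ : ∀ (k : ℤ) (y : GVert n), σ ((π ^ k) y) = (π ^ (-k)) (σ y) := by
    intro k y
    have := (hsσ.zpow_right k).eq
    have h2 : σ * π ^ k = π ^ (-k) * σ := by
      rw [this, zpow_neg, inv_zpow]
    have := congrArg (fun f : Equiv.Perm (GVert n) => f y) h2
    simpa [Equiv.Perm.mul_apply] using this
  have hπx : ∀ y, π y = γ (σ y) := fun y => rfl
  have hσx : ∀ y, σ y = γ (π y) := by
    intro y; rw [hπx, hγ2]
  have hσγ : ∀ y, σ (γ y) = π⁻¹ y := by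
    intro y
    have := congrArg (fun f : Equiv.Perm (GVert n) => f y) hπinv
    simpa [Equiv.Perm.mul_apply] using this.symm
  -- base point
  set x0 : GVert n := ((0 : Fin n), false) with hx0
  -- Claim A
  have hA : ∀ k : ℤ, γ x0 ≠ (π ^ k) x0 := by
    intro k hk
    rcases Int.even_or_odd k with ⟨j, hj⟩ | ⟨j, hj⟩
    · apply hγfp ((π ^ j) x0)
      rw [hconjγ j x0, hk, hj]
      rw [← Equiv.Perm.mul_apply, ← zpow_add]
      congr 1
      ring_nf
    · apply hσfp ((π ^ j) x0)
      rw [hconjσ j x0, hσx x0, show π x0 = (π ^ (1:ℤ)) x0 by rw [zpow_one],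
        hconjγ 1 x0, hk, hj]
      rw [← Equiv.Perm.mul_apply, ← zpow_add, ← Equiv.Perm.mul_apply, ← zpow_add]
      congr 1
      ring_nf
  -- Claim B : two orbits
  have hB : ∀ y : GVert n, (∃ k : ℤ, (π ^ k) x0 = y) ∨ (∃ k : ℤ, (π ^ k) x0 = γ y) := by
    have hcard : Nat.card (MulAction.orbitRel.Quotient (Subgroup.zpowers π) (GVert n)) = 2 := h2
    obtain ⟨a, b, hab, huniv⟩ := Nat.card_eq_two_iff.mp hcard
    set q0 : MulAction.orbitRel.Quotient (Subgroup.zpowers π) (GVert n) := Quotient.mk'' x0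
    set q1 : MulAction.orbitRel.Quotient (Subgroup.zpowers π) (GVert n) := Quotient.mk'' (γ x0)
    have horb : ∀ y z : GVert n,
        (Quotient.mk'' y : MulAction.orbitRel.Quotient (Subgroup.zpowers π) (GVert n)) =
          Quotient.mk'' z ↔ ∃ k : ℤ, (π ^ k) z = y := by
      intro y z
      rw [Quotient.eq'']
      exact Iff.trans MulAction.orbitRel_apply (mem_orbit_zpowers_iff π y z)
    have hq01 : q0 ≠ q1 := by
      intro h
      obtain ⟨k, hk⟩ := (horb x0 (γ x0)).mp h
      apply hA (-k)
      have h3 : (π ^ (-k)) x0 = γ x0 := by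
        conv_lhs => rw [← hk]
        rw [← Equiv.Perm.mul_apply, ← zpow_add]
        simp
      exact h3.symm
    have hmem : ∀ q : MulAction.orbitRel.Quotient (Subgroup.zpowers π) (GVert n),
        q = q0 ∨ q = q1 := by
      intro q
      have h0 : q0 ∈ ({a, b} : Set _) := huniv ▸ Set.mem_univ _
      have h1 : q1 ∈ ({a, b} : Set _) := huniv ▸ Set.mem_univ _
      have hq : q ∈ ({a, b} : Set _) := huniv ▸ Set.mem_univ _
      simp only [Set.mem_insert_iff, Set.mem_singleton_iff] at h0 h1 hq
      rcases h0 with h0 | h0 <;> rcases h1 with h1 | h1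
      · exact absurd (h0.trans h1.symm) hq01
      · rcases hq with hq | hq
        · exact Or.inl (hq.trans h0.symm)
        · exact Or.inr (hq.trans h1.symm)
      · rcases hq with hq | hq
        · exact Or.inr (hq.trans h1.symm)
        · exact Or.inl (hq.trans h0.symm)
      · exact absurd (h0.trans h1.symm) hq01
    intro y
    rcases hmem (Quotient.mk'' y) with h | h
    · exact Or.inl ((horb y x0).mp h)
    · obtain ⟨k, hk⟩ := (horb y (γ x0)).mp h
      refine Or.inr ⟨-k, ?_⟩
      rw [← hk]
      rw [hconjγ k (γ x0), hγ2]
  -- minimal period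
  set m := Function.minimalPeriod ⇑π x0 with hmdef
  have hper : Function.IsPeriodicPt ⇑π m x0 := Function.isPeriodicPt_minimalPeriod ⇑π x0
  have hm0 : 0 < m := by
    apply Function.IsPeriodicPt.minimalPeriod_pos (orderOf_pos π)
    show (⇑π)^[orderOf π] x0 = x0
    rw [← Equiv.Perm.coe_pow, pow_orderOf_eq_one]
    rfl
  have hπm : (π ^ m) x0 = x0 := by
    have := hper
    rwa [Function.IsPeriodicPt, Function.IsFixedPt, ← Equiv.Perm.coe_pow] at this
  have hfixm : ∀ k : ℤ, (m : ℤ) ∣ k → (π ^ k) x0 = x0 := by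
    rintro k ⟨t, rfl⟩
    rw [zpow_mul, zpow_natCast]
    exact Function.IsFixedPt.perm_zpow hπm t
  have hmodm : ∀ a b : ℤ, (m : ℤ) ∣ a - b → (π ^ a) x0 = (π ^ b) x0 := by
    intro a b hd
    have : a = b + (a - b) := by ring
    rw [this, zpow_add, Equiv.Perm.mul_apply, hfixm _ hd]
  have hsur0 : ∀ k : ℤ, ∃ j : Fin m, (π ^ ((j : ℕ) : ℤ)) x0 = (π ^ k) x0 := by
    intro k
    have hmne : (m : ℤ) ≠ 0 := by exact_mod_cast hm0.ne'
    have h0le : 0 ≤ k % (m : ℤ) := Int.emod_nonneg k hmne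
    have hlt : k % (m : ℤ) < (m : ℤ) := Int.emod_lt_of_pos k (by exact_mod_cast hm0)
    refine ⟨⟨(k % (m : ℤ)).toNat, ?_⟩, ?_⟩
    · omega
    · rw [Int.toNat_of_nonneg h0le]
      apply hmodm
      exact dvd_sub_comm.mp (Int.dvd_self_sub_of_emod_eq rfl)
  -- the bijection on `Fin m × Bool`
  set E : Fin m × Bool → GVert n :=
    fun p => if p.2 then γ ((π ^ ((p.1 : ℕ) : ℤ)) x0) else (π ^ ((p.1 : ℕ) : ℤ)) x0 with hEdef
  have hcomp : ∀ (a b : ℤ) (y : GVert n), (π ^ a) ((π ^ b) y) = (π ^ (a + b)) y := by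
    intro a b y
    rw [← Equiv.Perm.mul_apply, ← zpow_add]
  have hAll : ∀ k l : ℤ, γ ((π ^ k) x0) ≠ (π ^ l) x0 := by
    intro k l h
    apply hA (l + k)
    rw [hconjγ k x0] at h
    have h2 := congrArg (⇑(π ^ (k : ℤ))) h
    rw [hcomp, hcomp] at h2
    simp only [add_neg_cancel, zpow_zero, Equiv.Perm.one_apply] at h2
    rw [add_comm l k]
    exact h2
  have hinjnat : ∀ a b : ℕ, a < m → b < m → (π ^ (a : ℤ)) x0 = (π ^ (b : ℤ)) x0 → a = b := by
    intro a b ha hb h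
    rw [zpow_natCast, zpow_natCast, Equiv.Perm.coe_pow, Equiv.Perm.coe_pow] at h
    exact Function.iterate_injOn_Iio_minimalPeriod (Set.mem_Iio.mpr ha) (Set.mem_Iio.mpr hb) h
  have hEinj : Function.Injective E := by
    rintro ⟨j, b⟩ ⟨j', b'⟩ h
    simp only [hEdef] at h
    cases b <;> cases b' <;> simp only [if_true, if_false, Bool.false_eq_true] at h
    · exact Prod.ext (Fin.ext (hinjnat _ _ j.2 j'.2 h)) rfl
    · exact absurd h.symm (hAll _ _)
    · exact absurd h (hAll _ _)
    · have := γ.injective h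
      exact Prod.ext (Fin.ext (hinjnat _ _ j.2 j'.2 this)) rfl
  have hEsur : Function.Surjective E := by
    intro y
    rcases hB y with ⟨k, hk⟩ | ⟨k, hk⟩
    · obtain ⟨j, hj⟩ := hsur0 k
      exact ⟨(j, false), by simp only [hEdef, if_false, Bool.false_eq_true]; rw [hj, hk]⟩
    · obtain ⟨j, hj⟩ := hsur0 k
      refine ⟨(j, true), ?_⟩
      simp only [hEdef, if_true]
      rw [hj]
      have := congrArg ⇑γ hk
      rw [hγ2] at this
      exact this
  have hmn : m = n := by
    have hcard := Fintype.card_congr (Equiv.ofBijective E ⟨hEinj, hEsur⟩)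
    simp only [Fintype.card_prod, Fintype.card_fin, Fintype.card_bool] at hcard
    omega
  -- transport to `Fin n` and conclude
  set e : Equiv.Perm (GVert n) :=
    (Equiv.prodCongr (finCongr hmn.symm) (Equiv.refl Bool)).trans
      (Equiv.ofBijective E ⟨hEinj, hEsur⟩) with hedef
  have hEapp : ∀ (j : Fin n) (b : Bool),
      e (j, b) = E (⟨(j : ℕ), by rw [hmn]; exact j.isLt⟩, b) := by
    intro j b
    rfl
  have hπn : ∀ a b : ℕ, a % n = b % n → (π ^ (a : ℤ)) x0 = (π ^ (b : ℤ)) x0 := by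
    intro a b hab
    apply hmodm
    rw [hmn]
    have h1 : (a : ℤ) % (n : ℤ) = (b : ℤ) % (n : ℤ) := by
      rw [← Int.natCast_mod, ← Int.natCast_mod, hab]
    exact dvd_sub_comm.mp (Int.ModEq.dvd h1)
  have hcommγ : ∀ p, γ (e p) = e (γ p) := by
    rintro ⟨j, b⟩
    rw [show γ (j, b) = (j, !b) from rfl, hEapp, hEapp]
    cases b
    · rfl
    · exact hγ2 _
  have hstep : ∀ j : Fin n, σ (e (j, false)) = e (j + 1, true) := by
    intro j
    rw [hEapp, hEapp]
    have hlhs : σ ((π ^ (((j : ℕ) : ℤ))) x0) = γ ((π ^ (((j : ℕ) : ℤ) + 1)) x0) := by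
      rw [hconjσ, hσx x0, show π x0 = (π ^ (1 : ℤ)) x0 by rw [zpow_one],
        hconjγ 1 x0, hcomp, hconjγ (((j : ℕ) : ℤ) + 1) x0]
      ring_nf
    show σ ((π ^ (((j : ℕ) : ℤ))) x0) = γ ((π ^ ((((j + 1 : Fin n) : ℕ)) : ℤ)) x0)
    rw [hlhs]
    congr 1
    have : (((j : ℕ) : ℤ) + 1) = (((j : ℕ) + 1 : ℕ) : ℤ) := by push_cast; ring
    rw [this]
    apply hπn
    rw [Fin.val_add, Fin.val_one']
    simp [Nat.add_mod]
  have hcommσ : ∀ p, σ (e p) = e (stdSigma n p) := by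
    rintro ⟨j, b⟩
    cases b
    · rw [stdSigma_false]
      exact hstep j
    · rw [stdSigma_true]
      have h1 := hstep (j - 1)
      rw [sub_add_cancel] at h1
      rw [← h1, hσ2]
  exact ⟨e, hcommγ, hcommσ⟩



end GenomeAux

/-- The numbers `M_n(h;c)` do not depend on the choice of the reference unichromosomal
genome: if `σ` and `σ'` are fixed-point-free involutions of `Vₙ` such that `γₙ∘σ` and
`γₙ∘σ'` each have exactly `2` orbits, then for every `h ≥ 1` and every finitely supported
sequence `c` of nonnegative integers, the number of fixed-point-free involutions `τ` of
`Vₙ` such that `γₙ∘τ` has exactly `2h` orbits and `σ∘τ` has exactly `2·c_ℓ` orbits of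
size `ℓ` for every `ℓ` equals the corresponding number for `σ'`. -/
theorem card_genomes_indep_of_reference :
    ∀ n : ℕ, 1 ≤ n → ∀ σ σ' : Equiv.Perm (GVert n),
      IsGenome σ → IsGenome σ' →
      orbTotal (gammaPerm n * σ) = 2 → orbTotal (gammaPerm n * σ') = 2 →
      ∀ (h : ℕ) (c : ℕ → ℕ), 1 ≤ h → (Function.support c).Finite →
        Nat.card {τ : Equiv.Perm (GVert n) //
            IsGenome τ ∧ orbTotal (gammaPerm n * τ) = 2 * h ∧
              ∀ ℓ, 1 ≤ ℓ → orbCount (σ * τ) ℓ = 2 * c ℓ} =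
        Nat.card {τ : Equiv.Perm (GVert n) //
            IsGenome τ ∧ orbTotal (gammaPerm n * τ) = 2 * h ∧
              ∀ ℓ, 1 ≤ ℓ → orbCount (σ' * τ) ℓ = 2 * c ℓ} := by
  intro n hn σ σ' hσ hσ' h2 h2' h c _hh _hc
  haveI : NeZero n := ⟨by omega⟩
  obtain ⟨e, heγ, heσ⟩ := GenomeAux.exists_normal σ hσ h2
  obtain ⟨e', heγ', heσ'⟩ := GenomeAux.exists_normal σ' hσ' h2'
  set g : Equiv.Perm (GVert n) := (e.symm.trans e' : Equiv.Perm (GVert n)) with hgdef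
  have hgapp : ∀ y, g y = e' (e.symm y) := fun y => rfl
  have hsymmγ : ∀ y, e.symm (gammaPerm n y) = gammaPerm n (e.symm y) := by
    intro y
    apply e.injective
    rw [Equiv.apply_symm_apply, ← heγ, Equiv.apply_symm_apply]
  have hsymmσ : ∀ y, e.symm (σ y) = GenomeAux.stdSigma n (e.symm y) := by
    intro y
    apply e.injective
    rw [Equiv.apply_symm_apply, ← heσ, Equiv.apply_symm_apply]
  have hgγ : gammaPerm n * g = g * gammaPerm n := by
    ext y : 1
    show gammaPerm n (g y) = g (gammaPerm n y)
    rw [hgapp, hgapp, heγ', hsymmγ]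
  have hgσ : σ' * g = g * σ := by
    ext y : 1
    show σ' (g y) = g (σ y)
    rw [hgapp, hgapp, heσ', hsymmσ]
  have hgγ' : gammaPerm n * g⁻¹ = g⁻¹ * gammaPerm n := by
    have h1 := congrArg (fun x => g⁻¹ * x * g⁻¹) hgγ
    calc gammaPerm n * g⁻¹ = g⁻¹ * (g * gammaPerm n) * g⁻¹ := by group
    _ = g⁻¹ * (gammaPerm n * g) * g⁻¹ := by rw [hgγ]
    _ = g⁻¹ * gammaPerm n := by group
  have hgσ' : σ * g⁻¹ = g⁻¹ * σ' := by
    calc σ * g⁻¹ = g⁻¹ * (g * σ) * g⁻¹ := by group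
    _ = g⁻¹ * (σ' * g) * g⁻¹ := by rw [hgσ]
    _ = g⁻¹ * σ' := by group
  refine Nat.card_congr (Equiv.ofBijective
    (fun t => ⟨g * t.1 * g⁻¹, GenomeAux.transfer g t.1 σ σ' h c hgγ hgσ t.2⟩) ⟨?_, ?_⟩)
  · rintro ⟨t1, h1⟩ ⟨t2, ht2⟩ hEq
    have := congrArg Subtype.val hEq
    simp only at this
    apply Subtype.ext
    have h3 := mul_right_cancel this
    exact mul_left_cancel h3
  · rintro ⟨t, ht⟩
    have ht' := GenomeAux.transfer g⁻¹ t σ' σ h c hgγ' hgσ' ht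
    rw [inv_inv] at ht'
    refine ⟨⟨g⁻¹ * t * g, ht'⟩, ?_⟩
    apply Subtype.ext
    show g * (g⁻¹ * t * g) * g⁻¹ = t
    group
end

section
/- Let α and β be fixed-point-free involutions of a finite set X. Then the permutation α maps every orbit of α∘β bijectively onto an orbit of α∘β of the same size that is disjoint from it; consequently, for every ℓ ≥ 1, the number of orbits of α∘β of size ℓ is even (the orbits of α∘β come in pairs of equal size, the two orbits contained in each alternating cycle of the union of the two perfect matchings determined by α and β). -/
open scoped Classical

lemma my_mp_pos {X : Type*} [Fintype X] (π : Equiv.Perm X) (x : X) :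
    0 < Function.minimalPeriod (⇑π) x := by
  apply Function.IsPeriodicPt.minimalPeriod_pos (orderOf_pos π)
  show Function.IsPeriodicPt _ _ x
  rw [Function.IsPeriodicPt, Function.IsFixedPt, Equiv.Perm.iterate_eq_pow,
    pow_orderOf_eq_one]
  rfl

lemma my_orbit_card {X : Type*} [Fintype X] (π : Equiv.Perm X) (x : X) :
    (Finset.univ.filter (fun y => π.SameCycle x y)).card
      = Function.minimalPeriod (⇑π) x := by
  set n := Function.minimalPeriod (⇑π) x with hn
  have hpos : 0 < n := my_mp_pos π x
  apply Finset.card_eq_of_bijective (fun i _ => (π ^ i) x)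
  · intro a ha
    rw [Finset.mem_filter] at ha
    obtain ⟨i, -, -, hi⟩ := ha.2.exists_pow_eq π
    refine ⟨i % n, Nat.mod_lt _ hpos, ?_⟩
    rw [← hi, ← Equiv.Perm.iterate_eq_pow, ← Equiv.Perm.iterate_eq_pow, hn,
      Function.iterate_mod_minimalPeriod_eq]
  · intro i _
    simp only [Finset.mem_filter, Finset.mem_univ, true_and]
    exact ⟨(i : ℤ), by simp [zpow_natCast]⟩
  · intro i j hi hj h
    exact Function.iterate_injOn_Iio_minimalPeriod (by simpa using hi) (by simpa using hj)
      (by simpa [Equiv.Perm.iterate_eq_pow] using h)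

lemma my_mp_sameCycle {X : Type*} [Fintype X] (π : Equiv.Perm X) {x y : X}
    (h : π.SameCycle x y) :
    Function.minimalPeriod (⇑π) y = Function.minimalPeriod (⇑π) x := by
  obtain ⟨i, rfl⟩ := h
  rw [Function.minimalPeriod_eq_minimalPeriod_iff]
  intro n
  simp only [Function.IsPeriodicPt, Function.IsFixedPt, Equiv.Perm.iterate_eq_pow]
  constructor
  · intro hh
    have : (π ^ i) ((π ^ n) x) = (π ^ i) x := by
      rw [← Equiv.Perm.mul_apply, ← zpow_natCast (π) n, ← zpow_add, add_comm,
        zpow_add, zpow_natCast, Equiv.Perm.mul_apply, hh]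
    exact (π ^ i).injective this
  · intro hh
    rw [← Equiv.Perm.mul_apply, ← zpow_natCast (π) n, ← zpow_add, add_comm,
      zpow_add, zpow_natCast, Equiv.Perm.mul_apply, hh]



/-- The orbit of the point `x` under the permutation `π` (the set of points in the same
cycle of `π` as `x`). -/
def orbitSet {X : Type*} (π : Equiv.Perm X) (x : X) : Set X :=
  {y | π.SameCycle x y}

/-- Let `α` and `β` be fixed-point-free involutions of a finite set `X`. Then `α` maps
every orbit of `α∘β` bijectively onto an orbit of `α∘β` of the same size that is disjoint
from it; consequently, for every `ℓ ≥ 1`, the number of orbits of `α∘β` of size `ℓ` is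
even. -/
theorem involutions_orbits_paired {X : Type*} [Fintype X] (α β : Equiv.Perm X)
    (hα₁ : α * α = 1) (hα₂ : ∀ x, α x ≠ x)
    (hβ₁ : β * β = 1) (hβ₂ : ∀ x, β x ≠ x) :
    (∀ x : X,
        Set.BijOn (⇑α) (orbitSet (α * β) x) (orbitSet (α * β) (α x)) ∧
        (orbitSet (α * β) (α x)).ncard = (orbitSet (α * β) x).ncard ∧
        Disjoint (orbitSet (α * β) x) (orbitSet (α * β) (α x))) ∧
    ∀ ℓ : ℕ, 1 ≤ ℓ → Even (orbCount (α * β) ℓ) := by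
  classical
  set π : Equiv.Perm X := α * β with hπ
  have hαinv : α⁻¹ = α := inv_eq_of_mul_eq_one_left hα₁
  have hβinv : β⁻¹ = β := inv_eq_of_mul_eq_one_left hβ₁
  have hαα : ∀ z, α (α z) = z := by
    intro z
    have : (α * α) z = (1 : Equiv.Perm X) z := by rw [hα₁]
    simpa using this
  have hαπ : α * π = β := by rw [hπ, ← mul_assoc, hα₁, one_mul]
  have hπα : π⁻¹ * α = β := by
    rw [hπ, mul_inv_rev, hαinv, hβinv, mul_assoc, hα₁, mul_one]
  have hconj : α * π * α⁻¹ = π⁻¹ := by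
    rw [hαπ, hαinv, ← hπα, mul_assoc, hα₁, mul_one]
  have hz : ∀ (i : ℤ) (y : X), α ((π ^ i) y) = (π ^ (-i)) (α y) := by
    intro i y
    have h1 : (α * π * α⁻¹) ^ i = α * π ^ i * α⁻¹ := conj_zpow
    rw [hconj] at h1
    have h2 : α * π ^ i = π ^ (-i) * α := by
      rw [zpow_neg, ← inv_zpow, h1, hαinv, mul_assoc, hα₁, mul_one]
    calc α ((π ^ i) y) = (α * π ^ i) y := rfl
      _ = (π ^ (-i) * α) y := by rw [h2]
      _ = (π ^ (-i)) (α y) := rfl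
  have hsc : ∀ {x y : X}, π.SameCycle x y → π.SameCycle (α x) (α y) := by
    rintro x y ⟨i, rfl⟩
    exact ⟨-i, (hz i x).symm⟩
  have hdisj : ∀ x : X, ¬ π.SameCycle x (α x) := by
    rintro x ⟨i, hi⟩
    have hA : ∀ j : ℤ, α ((π ^ j) x) = (π ^ (i - j)) x := by
      intro j
      rw [hz, ← hi, ← Equiv.Perm.mul_apply, ← zpow_add]
      congr 2
      ring
    rcases Int.even_or_odd i with ⟨m, hm⟩ | ⟨m, hm⟩
    · have h := hA m
      rw [hm, show m + m - m = m by ring] at h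
      exact hα₂ _ h
    · have h := hA (m + 1)
      rw [hm, show 2 * m + 1 - (m + 1) = m by ring] at h
      have hstep : (π ^ (m + 1)) x = π ((π ^ m) x) := by
        rw [add_comm, zpow_add, zpow_one, Equiv.Perm.mul_apply]
      have hb : β ((π ^ m) x) = (π ^ m) x := by
        calc β ((π ^ m) x) = (α * π) ((π ^ m) x) := by rw [hαπ]
          _ = α (π ((π ^ m) x)) := Equiv.Perm.mul_apply _ _ _
          _ = α ((π ^ (m + 1)) x) := by rw [hstep]
          _ = (π ^ m) x := h
      exact hβ₂ _ hb
  have hmpα : ∀ x : X, Function.minimalPeriod (⇑π) (α x) = Function.minimalPeriod (⇑π) x := by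
    intro x
    rw [Function.minimalPeriod_eq_minimalPeriod_iff]
    intro n
    simp only [Function.IsPeriodicPt, Function.IsFixedPt, Equiv.Perm.iterate_eq_pow]
    have key : (π ^ n) (α x) = α ((π ^ (-(n : ℤ))) x) := by rw [hz, neg_neg, zpow_natCast]
    constructor
    · intro hh
      rw [key] at hh
      have h2 : (π ^ (-(n : ℤ))) x = x := α.injective hh
      have h3 : (π ^ (n : ℤ)) ((π ^ (-(n : ℤ))) x) = (π ^ (n : ℤ)) x := by rw [h2]
      rw [← Equiv.Perm.mul_apply, ← zpow_add, add_neg_cancel, zpow_zero] at h3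
      simpa [zpow_natCast] using h3.symm
    · intro hh
      rw [key]
      have h2 : (π ^ (-(n : ℤ))) ((π ^ (n : ℤ)) x) = (π ^ (-(n : ℤ))) x := by
        rw [zpow_natCast, hh]
      rw [← Equiv.Perm.mul_apply, ← zpow_add, neg_add_cancel, zpow_zero] at h2
      rw [← h2]
      simp
  constructor
  · intro x
    have hbij : Set.BijOn (⇑α) (orbitSet π x) (orbitSet π (α x)) := by
      refine ⟨fun y hy => hsc hy, α.injective.injOn, ?_⟩
      intro y hy
      refine ⟨α y, ?_, hαα y⟩
      have := hsc hy
      rwa [hαα] at this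
    refine ⟨hbij, ?_, ?_⟩
    · rw [← hbij.image_eq, Set.ncard_image_of_injective _ α.injective]
    · rw [Set.disjoint_left]
      intro y hy hy'
      exact hdisj x (Equiv.Perm.SameCycle.trans hy (Equiv.Perm.SameCycle.symm hy'))
  · intro ℓ hℓ
    have hℓpos : 0 < ℓ := hℓ
    set s : Finset X := Finset.univ.filter (fun y => Function.minimalPeriod (⇑π) y = ℓ)
      with hs
    have hcard : Nat.card {x : X // Function.minimalPeriod (⇑π) x = ℓ} = s.card := by
      rw [Nat.card_eq_fintype_card, hs]
      simp [Fintype.card_subtype]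
    -- setoid pairing orbits
    let r : Setoid X :=
      ⟨fun a b => π.SameCycle a b ∨ π.SameCycle a (α b), by
        constructor
        · intro a; exact Or.inl (Equiv.Perm.SameCycle.refl _ _)
        · rintro a b (h | h)
          · exact Or.inl h.symm
          · right
            have := hsc h.symm
            rwa [hαα] at this
        · rintro a b c (h1 | h1) (h2 | h2)
          · exact Or.inl (h1.trans h2)
          · exact Or.inr (h1.trans h2)
          · right
            have h2' := hsc h2
            exact h1.trans h2'
          · left
            have h2' := hsc h2
            rw [hαα] at h2'
            exact h1.trans h2'⟩
    have hdvd : 2 * ℓ ∣ s.card := by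
      have H : ∀ y ∈ s, Quotient.mk r y ∈ s.image (Quotient.mk r) := fun y hy =>
        Finset.mem_image_of_mem _ hy
      rw [Finset.card_eq_sum_card_fiberwise H]
      apply Finset.dvd_sum
      intro b hb
      obtain ⟨x, hx, rfl⟩ := Finset.mem_image.mp hb
      have hxℓ : Function.minimalPeriod (⇑π) x = ℓ := (Finset.mem_filter.mp hx).2
      have hfib : s.filter (fun a => Quotient.mk r a = Quotient.mk r x)
          = Finset.univ.filter (fun y => π.SameCycle x y)
            ∪ Finset.univ.filter (fun y => π.SameCycle (α x) y) := by
        ext y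
        simp only [Finset.mem_filter, Finset.mem_union, Finset.mem_univ, true_and, hs,
          Finset.mem_filter]
        constructor
        · rintro ⟨-, hq⟩
          have hr : π.SameCycle y x ∨ π.SameCycle y (α x) := Quotient.eq'.mp hq
          rcases hr with h | h
          · exact Or.inl h.symm
          · exact Or.inr h.symm
        · rintro (h | h)
          · refine ⟨?_, Quotient.sound (Or.inl h.symm)⟩
            rw [my_mp_sameCycle π h, hxℓ]
          · refine ⟨?_, ?_⟩
            · rw [my_mp_sameCycle π h, hmpα, hxℓ]
            · apply Quotient.sound
              show π.SameCycle y x ∨ π.SameCycle y (α x)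
              exact Or.inr h.symm
      rw [hfib, Finset.card_union_of_disjoint, my_orbit_card, my_orbit_card, hmpα, hxℓ]
      · exact ⟨1, by ring⟩
      · rw [Finset.disjoint_left]
        intro y hy hy'
        simp only [Finset.mem_filter, Finset.mem_univ, true_and] at hy hy'
        exact hdisj x (hy.trans hy'.symm)
    obtain ⟨m, hm⟩ := hdvd
    refine ⟨m, ?_⟩
    rw [orbCount, hcard, hm, show 2 * ℓ * m = ℓ * (2 * m) by ring,
      Nat.mul_div_cancel_left _ hℓpos]
    ring
end
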